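/- For every o ∈ 𝒳, the function t ↦ d_KL(P_t(o,·), π) is differentiable on (0,∞) and its derivative satisfies −(d/dt) d_KL(P_t(o,·), π) = Σ_{x,y ∈ 𝒳} P_t(o,x) K(x,y) ( log(P_t(o,x)/π(x)) − log(P_t(o,y)/π(y)) ) for all t > 0. -/

import Mathlib

/-!
Since `P_t(o,·) = e^{-t} (e^{tK})(o,·)` is a row of the matrix exponential `e^{t(K - I)}`, it
solves the forward equation `∂ₜ P_t(o,y) = ∑_z P_t(o,z) K(z,y) - P_t(o,y)`, and by irreducibility
it is positive for `t > 0`. Differentiating `∑ μ log (μ / π)` along a positive curve `μ` gives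
`∑ μ' (log (μ / π) + 1)`. Since the rows of `K` sum to one, the forward equation preserves total
mass, so the `+ 1` contributes nothing, and moving `K` from `P_t` onto the logarithm turns the
remaining sum into minus the sum over edges.
-/

open scoped Classical

noncomputable section

/-- `n`-th power of a kernel `K` on a finite set. -/
def matPow {X : Type*} [Fintype X] [DecidableEq X] (K : X → X → ℝ) : ℕ → X → X → ℝ
  | 0 => fun x y => if x = y then 1 else 0
  | n + 1 => fun x y => ∑ z, matPow K n x z * K z y

/-- `K` is a stochastic matrix with entries in `[0,1]` and rows summing to `1`. -/
def IsStochastic {X : Type*} [Fintype X] (K : X → X → ℝ) : Prop :=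
  (∀ x y, 0 ≤ K x y ∧ K x y ≤ 1) ∧ ∀ x, ∑ y, K x y = 1

/-- Irreducibility: any state can be reached from any state. -/
def IsIrreducibleMatrix {X : Type*} [Fintype X] [DecidableEq X] (K : X → X → ℝ) : Prop :=
  ∀ x y, ∃ n : ℕ, 0 < matPow K n x y

/-- `π` is the (positive) stationary probability vector of `K`. -/
def IsStationaryProb {X : Type*} [Fintype X] (K : X → X → ℝ) (π : X → ℝ) : Prop :=
  (∀ x, 0 < π x) ∧ (∑ x, π x = 1) ∧ ∀ y, ∑ x, π x * K x y = π y

/-- A probability vector on a finite set. -/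
def IsProbVector {X : Type*} [Fintype X] (μ : X → ℝ) : Prop :=
  (∀ x, 0 ≤ μ x) ∧ ∑ x, μ x = 1

/-- Continuous-time heat kernel `P_t(x,y) = e^{-t} ∑ t^n/n! Kⁿ(x,y)`. -/
def heatKernel {X : Type*} [Fintype X] [DecidableEq X] (K : X → X → ℝ) (t : ℝ) (x y : X) : ℝ :=
  Real.exp (-t) * ∑' n : ℕ, t ^ n / (Nat.factorial n : ℝ) * matPow K n x y

/-- Total variation distance between two vectors. -/
def dTV {X : Type*} [Fintype X] (μ ν : X → ℝ) : ℝ := (∑ x, |μ x - ν x|) / 2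

/-- Relative entropy (Kullback–Leibler divergence). -/
def dKL {X : Type*} [Fintype X] (μ ν : X → ℝ) : ℝ := ∑ x, μ x * Real.log (μ x / ν x)

/-- Varentropy. -/
def varKL {X : Type*} [Fintype X] (μ ν : X → ℝ) : ℝ :=
  ∑ x, μ x * (Real.log (μ x / ν x) - dKL μ ν) ^ 2

/-- Worst-case total variation distance to equilibrium at time `t`. -/
def worstTV {X : Type*} [Fintype X] [DecidableEq X] (K : X → X → ℝ) (π : X → ℝ) (t : ℝ) : ℝ :=
  sSup {v : ℝ | ∃ o : X, v = dTV (heatKernel K t o) π}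

/-- Worst-case relative entropy to equilibrium at time `t`. -/
def worstKL {X : Type*} [Fintype X] [DecidableEq X] (K : X → X → ℝ) (π : X → ℝ) (t : ℝ) : ℝ :=
  sSup {v : ℝ | ∃ o : X, v = dKL (heatKernel K t o) π}

/-- Worst-case varentropy at time `t`. -/
def worstVar {X : Type*} [Fintype X] [DecidableEq X] (K : X → X → ℝ) (π : X → ℝ) (t : ℝ) : ℝ :=
  sSup {v : ℝ | ∃ o : X, v = varKL (heatKernel K t o) π}

/-- Mixing time: first time the worst-case TV distance drops below `ε`. -/
def mixingTime {X : Type*} [Fintype X] [DecidableEq X] (K : X → X → ℝ) (π : X → ℝ) (ε : ℝ) : ℝ :=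
  sInf {t : ℝ | 0 ≤ t ∧ worstTV K π t ≤ ε}

/-- Variance of `f` with respect to `π`. -/
def varPi {X : Type*} [Fintype X] (π f : X → ℝ) : ℝ :=
  ∑ x, π x * (f x - ∑ y, π y * f y) ^ 2

/-- Poincaré constant: the largest `γ` with `γ·Var_π(f) ≤ (1/2)∑ π(x)K(x,y)(f(x)-f(y))²`. -/
def poincare {X : Type*} [Fintype X] (K : X → X → ℝ) (π : X → ℝ) : ℝ :=
  sSup {γ : ℝ | ∀ f : X → ℝ, γ * varPi π f ≤ (∑ x, ∑ y, π x * K x y * (f x - f y) ^ 2) / 2}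

/-- Smallest non-zero entry of `K`. -/
def minEntry {X : Type*} [Fintype X] (K : X → X → ℝ) : ℝ :=
  sInf {v : ℝ | (∃ x y, v = K x y) ∧ 0 < v}

/-- Smallest stationary probability `p = min_x π(x)`. -/
def statMin {X : Type*} [Fintype X] (π : X → ℝ) : ℝ :=
  sInf {v : ℝ | ∃ x, v = π x}

/-- The support of `K` is symmetric. -/
def SymmSupport {X : Type*} (K : X → X → ℝ) : Prop :=
  ∀ x y, 0 < K x y → 0 < K y x

/-- Graph distance associated with the support of `K`. -/
def mdist {X : Type*} [Fintype X] [DecidableEq X] (K : X → X → ℝ) (x y : X) : ℕ :=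
  sInf {n : ℕ | 0 < matPow K n x y}

/-- Diameter of the state space for the distance `mdist`. -/
def mdiam {X : Type*} [Fintype X] [DecidableEq X] (K : X → X → ℝ) : ℕ :=
  Finset.sup Finset.univ fun p : X × X => mdist K p.1 p.2

/-- Lipschitz norm of `f` with respect to `mdist`. -/
def lipNorm {X : Type*} [Fintype X] [DecidableEq X] (K : X → X → ℝ) (f : X → ℝ) : ℝ :=
  sSup {v : ℝ | ∃ x y, x ≠ y ∧ v = |f x - f y| / (mdist K x y : ℝ)}

section HeatKernel

variable {X : Type*} [Fintype X] [DecidableEq X]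

lemma matPow_eq_pow (K : X → X → ℝ) (n : ℕ) : matPow K n = Matrix.of K ^ n := by
  induction n with
  | zero => ext x y; simp [matPow, Matrix.one_apply]
  | succ n ih => ext x y; simp [matPow, ih, pow_succ, Matrix.mul_apply]

lemma matPow_nonneg {K : X → X → ℝ} (hK : ∀ x y, 0 ≤ K x y) (n : ℕ) (x y : X) :
    0 ≤ matPow K n x y := by
  induction n generalizing y with
  | zero => simp only [matPow]; split_ifs <;> norm_num
  | succ n ih => exact Finset.sum_nonneg fun z _ => mul_nonneg (ih z) (hK z y)

-- Any Banach-algebra norm on matrices would do: it only serves to access `NormedSpace.exp`.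
attribute [local instance] Matrix.linftyOpNormedRing Matrix.linftyOpNormedAlgebra

lemma hasSum_matPow_series (K : X → X → ℝ) (t : ℝ) (x y : X) :
    HasSum (fun n => t ^ n / n.factorial * matPow K n x y)
      (NormedSpace.exp (t • Matrix.of K) x y) := by
  have h : HasSum (fun n => ((n.factorial : ℝ)⁻¹ • (t • Matrix.of K) ^ n) x y)
      (NormedSpace.exp (t • Matrix.of K) x y) :=
    Pi.hasSum.mp (Pi.hasSum.mp (NormedSpace.exp_series_hasSum_exp' (t • Matrix.of K)) x) y
  convert h using 2 with n
  rw [smul_pow, matPow_eq_pow]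
  simp [div_eq_inv_mul, mul_assoc]

lemma heatKernel_eq_exp (K : X → X → ℝ) (t : ℝ) (x y : X) :
    heatKernel K t x y = Real.exp (-t) * NormedSpace.exp (t • Matrix.of K) x y := by
  rw [heatKernel, (hasSum_matPow_series K t x y).tsum_eq]

lemma heatKernel_pos {K : X → X → ℝ} (hK : ∀ x y, 0 ≤ K x y) (hirr : IsIrreducibleMatrix K)
    {t : ℝ} (ht : 0 < t) (x y : X) : 0 < heatKernel K t x y := by
  obtain ⟨n, hn⟩ := hirr x y
  rw [heatKernel_eq_exp]
  have hterm : 0 < t ^ n / n.factorial * matPow K n x y := mul_pos (by positivity) hn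
  refine mul_pos (Real.exp_pos _) (hterm.trans_le ?_)
  exact le_hasSum (hasSum_matPow_series K t x y) n fun m _ =>
    mul_nonneg (by positivity) (matPow_nonneg hK m x y)

lemma hasDerivAt_heatKernel (K : X → X → ℝ) (t : ℝ) (x y : X) :
    HasDerivAt (fun u => heatKernel K u x y)
      (∑ z, heatKernel K t x z * K z y - heatKernel K t x y) t := by
  have hexp : HasDerivAt (fun u => NormedSpace.exp (u • Matrix.of K) x y)
      ((NormedSpace.exp (t • Matrix.of K) * Matrix.of K) x y) t :=
    hasDerivAt_pi.mp (hasDerivAt_pi.mp (hasDerivAt_exp_smul_const (Matrix.of K) t) x) y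
  have hprod := ((hasDerivAt_neg t).exp).fun_mul hexp
  simp only [← heatKernel_eq_exp] at hprod
  refine hprod.congr_deriv ?_
  rw [Matrix.mul_apply, Finset.mul_sum]
  simp only [heatKernel_eq_exp, Matrix.of_apply, mul_assoc]
  ring

end HeatKernel

section RelativeEntropy

variable {X : Type*} [Fintype X]

lemma hasDerivAt_dKL {μ : ℝ → X → ℝ} {μ' : X → ℝ} {ν : X → ℝ} {t : ℝ}
    (hμ : ∀ x, HasDerivAt (fun u => μ u x) (μ' x) t) (hμt : ∀ x, μ t x ≠ 0) (hν : ∀ x, ν x ≠ 0) :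
    HasDerivAt (fun u => dKL (μ u) ν) (∑ x, μ' x * (Real.log (μ t x / ν x) + 1)) t := by
  refine HasDerivAt.fun_sum fun x _ => ?_
  have hlog := ((hμ x).div_const (ν x)).log (div_ne_zero (hμt x) (hν x))
  refine ((hμ x).fun_mul hlog).congr_deriv ?_
  field_simp [hμt x, hν x]

lemma sum_generator_mul_add_one {K : X → X → ℝ} (hK : ∀ x, ∑ y, K x y = 1) (h f : X → ℝ) :
    ∑ x, (∑ z, h z * K z x - h x) * (f x + 1) = -∑ x, ∑ y, h x * K x y * (f x - f y) := by
  have hmass : ∑ x, ∑ z, h z * K z x = ∑ x, h x := by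
    rw [Finset.sum_comm]
    simp only [← Finset.mul_sum, hK, mul_one]
  have hdiag : ∑ x, ∑ y, h x * K x y * f x = ∑ x, h x * f x := by
    refine Finset.sum_congr rfl fun x _ => ?_
    rw [← Finset.sum_mul, ← Finset.mul_sum, hK, mul_one]
  have hoff : ∑ x, ∑ y, h x * K x y * f y = ∑ x, (∑ z, h z * K z x) * f x := by
    rw [Finset.sum_comm]
    simp only [Finset.sum_mul]
  simp only [mul_add, mul_sub, sub_mul, mul_one, Finset.sum_add_distrib, Finset.sum_sub_distrib,
    hmass, hdiag, hoff]
  ring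

end RelativeEntropy

theorem stmt_9_general {X : Type*} [Fintype X] [DecidableEq X]
    (K : X → X → ℝ) (π : X → ℝ)
    (hK : IsStochastic K) (hirr : IsIrreducibleMatrix K) (hπ : IsStationaryProb K π)
    (o : X) :
    DifferentiableOn ℝ (fun u => dKL (heatKernel K u o) π) (Set.Ioi (0 : ℝ)) ∧
    ∀ t : ℝ, 0 < t →
      -deriv (fun u => dKL (heatKernel K u o) π) t =
        ∑ x, ∑ y, heatKernel K t o x * K x y *
          (Real.log (heatKernel K t o x / π x) - Real.log (heatKernel K t o y / π y)) := by
  have hderiv : ∀ t : ℝ, 0 < t → HasDerivAt (fun u => dKL (heatKernel K u o) π)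
      (-∑ x, ∑ y, heatKernel K t o x * K x y *
          (Real.log (heatKernel K t o x / π x) - Real.log (heatKernel K t o y / π y))) t := by
    intro t ht
    rw [← sum_generator_mul_add_one hK.2]
    exact hasDerivAt_dKL (fun x => hasDerivAt_heatKernel K t o x)
      (fun x => (heatKernel_pos (fun x y => (hK.1 x y).1) hirr ht o x).ne')
      (fun x => (hπ.1 x).ne')
  exact ⟨fun t ht => (hderiv t ht).differentiableAt.differentiableWithinAt,
    fun t ht => by rw [(hderiv t ht).deriv, neg_neg]⟩

/-- Derivative of the relative entropy along the semi-group. -/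
theorem stmt_9 {X : Type*} [Fintype X] [DecidableEq X]
    (hcard : 2 ≤ Fintype.card X)
    (K : X → X → ℝ) (π : X → ℝ)
    (hK : IsStochastic K) (hirr : IsIrreducibleMatrix K) (hπ : IsStationaryProb K π)
    (o : X) :
    DifferentiableOn ℝ (fun u => dKL (heatKernel K u o) π) (Set.Ioi (0 : ℝ)) ∧
    ∀ t : ℝ, 0 < t →
      -deriv (fun u => dKL (heatKernel K u o) π) t =
        ∑ x, ∑ y, heatKernel K t o x * K x y *
          (Real.log (heatKernel K t o x / π x) - Real.log (heatKernel K t o y / π y)) :=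
  stmt_9_general K π hK hirr hπ o
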